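/- Let f : ℝ^d → ℝ be twice differentiable (possibly non-convex) such that all eigenvalues of its Hessian are bounded below by −μ with 0 < μ < 1 (equivalently, ⟨∇f(u) − ∇f(v), u − v⟩ ≥ −μ‖u − v‖² for all u, v). Define prox_f(x) = argmin_y { f(y) + (1/2)‖y − x‖² }, assumed to admit a minimizer at each point. Then for any x₁, x₂ ∈ ℝ^d, ‖prox_f(x₁) − prox_f(x₂)‖ ≤ (1/(1 − μ)) ‖x₁ − x₂‖. -/

import Mathlib

/-!
The first-order condition says `x = ∇f (prox x) + prox x`. Weak convexity makes `∇f + id`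
strongly monotone with modulus `1 - μ`, and by Cauchy–Schwarz the inverse of a strongly monotone
map with modulus `c > 0` is `c⁻¹`-Lipschitz.
-/

open RealInnerProductSpace

section InnerProductSpace

variable {E : Type*} [NormedAddCommGroup E] [InnerProductSpace ℝ E]

theorem inner_add_id_sub_ge_of_inner_sub_ge {g : E → E} {μ : ℝ}
    (hg : ∀ u v, -μ * ‖u - v‖ ^ 2 ≤ ⟪g u - g v, u - v⟫) (u v : E) :
    (1 - μ) * ‖u - v‖ ^ 2 ≤ ⟪(g u + u) - (g v + v), u - v⟫ := by
  have hsplit : (g u + u) - (g v + v) = (g u - g v) + (u - v) := by abel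
  rw [hsplit, inner_add_left, real_inner_self_eq_norm_sq]
  linarith [hg u v]

theorem norm_le_inv_mul_norm_of_mul_sq_le_inner {a b : E} {c : ℝ} (hc : 0 < c)
    (h : c * ‖a‖ ^ 2 ≤ ⟪b, a⟫) : ‖a‖ ≤ c⁻¹ * ‖b‖ := by
  rw [le_inv_mul_iff₀ hc]
  rcases (norm_nonneg a).eq_or_lt with ha | ha
  · rw [← ha, mul_zero]
    exact norm_nonneg b
  · have hcs : c * ‖a‖ * ‖a‖ ≤ ‖b‖ * ‖a‖ :=
      calc c * ‖a‖ * ‖a‖ = c * ‖a‖ ^ 2 := by ring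
        _ ≤ ⟪b, a⟫ := h
        _ ≤ ‖b‖ * ‖a‖ := real_inner_le_norm b a
    exact le_of_mul_le_mul_right hcs ha

end InnerProductSpace

theorem prox_lipschitz_of_weakly_convex_general
    {d : ℕ} (f : EuclideanSpace ℝ (Fin d) → ℝ) (μ : ℝ)
    (hμ1 : μ < 1)
    (hweak : ∀ u v : EuclideanSpace ℝ (Fin d),
      -μ * ‖u - v‖ ^ 2 ≤ ⟪gradient f u - gradient f v, u - v⟫)
    (prox : EuclideanSpace ℝ (Fin d) → EuclideanSpace ℝ (Fin d))
    (hfoc : ∀ x : EuclideanSpace ℝ (Fin d), gradient f (prox x) + prox x - x = 0)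
    (x₁ x₂ : EuclideanSpace ℝ (Fin d)) :
    ‖prox x₁ - prox x₂‖ ≤ (1 / (1 - μ)) * ‖x₁ - x₂‖ := by
  have hx : ∀ x, gradient f (prox x) + prox x = x := fun x => sub_eq_zero.mp (hfoc x)
  have hmono := inner_add_id_sub_ge_of_inner_sub_ge hweak (prox x₁) (prox x₂)
  rw [hx, hx] at hmono
  rw [one_div]
  exact norm_le_inv_mul_norm_of_mul_sq_le_inner (sub_pos.mpr hμ1) hmono

/-- **Quasi-non-expansiveness of the proximal operator of a weakly convex function.**
Let `f : ℝ^d → ℝ` be twice differentiable (possibly non-convex) whose Hessian eigenvalues are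
bounded below by `−μ` with `0 < μ < 1`; equivalently,
`⟪∇f u − ∇f v, u − v⟫ ≥ −μ‖u − v‖²` for all `u, v`.  Let `prox : ℝ^d → ℝ^d` be such that
`prox x` minimizes `y ↦ f y + (1/2)‖y − x‖²` (so it satisfies the first-order condition
`∇f (prox x) + prox x − x = 0`).  Then
`‖prox x₁ − prox x₂‖ ≤ (1/(1 − μ)) ‖x₁ − x₂‖` for all `x₁ x₂`. -/
theorem prox_lipschitz_of_weakly_convex
    {d : ℕ} (f : EuclideanSpace ℝ (Fin d) → ℝ) (μ : ℝ)
    (hμ0 : 0 < μ) (hμ1 : μ < 1)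
    (hdiff : ContDiff ℝ 2 f)
    (hweak : ∀ u v : EuclideanSpace ℝ (Fin d),
      -μ * ‖u - v‖ ^ 2 ≤ ⟪gradient f u - gradient f v, u - v⟫)
    (prox : EuclideanSpace ℝ (Fin d) → EuclideanSpace ℝ (Fin d))
    (hprox : ∀ x y : EuclideanSpace ℝ (Fin d),
      f (prox x) + (1 / 2) * ‖prox x - x‖ ^ 2 ≤ f y + (1 / 2) * ‖y - x‖ ^ 2)
    (hfoc : ∀ x : EuclideanSpace ℝ (Fin d), gradient f (prox x) + prox x - x = 0)
    (x₁ x₂ : EuclideanSpace ℝ (Fin d)) :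
    ‖prox x₁ - prox x₂‖ ≤ (1 / (1 - μ)) * ‖x₁ - x₂‖ :=
  prox_lipschitz_of_weakly_convex_general f μ hμ1 hweak prox hfoc x₁ x₂
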